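/- Concentration of convolutions: fix α ∈ ℕ and let p, q ∈ G be such that every coordinate of p and of q fixes all points x ≥ m. In the group algebra ℂ[G] (finitely supported functions on G with convolution), for n ∈ ℕ set δ_{p,n} := |K_n[α]·p·K_n[α]|⁻¹ · Σ_{g ∈ K_n[α]·p·K_n[α]} e_g, where e_g is the delta function at g, and similarly δ_{q,n}. Then there exists j₀ ≥ m such that for every j ≥ j₀, the quantity σ_n := Σ_{g ∈ K_n[α]·(p·Θ_j[α]·q)·K_n[α]} (δ_{p,n} * δ_{q,n})(g) tends to 1 as n → ∞. (That is, the convolution δ_{p,n} * δ_{q,n} concentrates, as n → ∞, on the double coset representing the ⊛-product of the double cosets of p and q.) -/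

import Mathlib

open Equiv

abbrev P3 := Equiv.Perm ℕ × Equiv.Perm ℕ × Equiv.Perm ℕ

/-- The subgroup of finitely supported permutations of `ℕ`. -/
def Sinf : Subgroup (Equiv.Perm ℕ) where
  carrier := {g | {x | g x ≠ x}.Finite}
  one_mem' := by
    show Set.Finite {x | (1 : Equiv.Perm ℕ) x ≠ x}
    convert Set.finite_empty
    ext x; simp
  mul_mem' {f g} hf hg := by
    apply Set.Finite.subset (hf.union hg)
    intro x hx
    simp only [Set.mem_setOf_eq, Set.mem_union, Equiv.Perm.mul_apply] at hx ⊢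
    by_contra hc
    push_neg at hc
    rw [hc.2] at hx
    exact hx hc.1
  inv_mem' {g} hg := by
    apply Set.Finite.subset hg
    intro x hx
    simp only [Set.mem_setOf_eq] at hx ⊢
    intro h
    apply hx
    apply g.injective
    rw [← Equiv.Perm.mul_apply, mul_inv_cancel, Equiv.Perm.one_apply, h]

/-- Permutations fixing every point `< α`. -/
def fixLt (α : ℕ) : Subgroup (Equiv.Perm ℕ) where
  carrier := {g | ∀ i < α, g i = i}
  one_mem' := fun _ _ => rfl
  mul_mem' {f g} hf hg := fun i hi => by
    simp only [Equiv.Perm.mul_apply, hg i hi, hf i hi]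
  inv_mem' {g} hg := fun i hi => by
    apply g.injective
    rw [← Equiv.Perm.mul_apply, mul_inv_cancel, Equiv.Perm.one_apply, hg i hi]

/-- The diagonal embedding of `Perm ℕ` into the triple product. -/
def diag3 : Equiv.Perm ℕ →* P3 where
  toFun h := (h, h, h)
  map_one' := rfl
  map_mul' _ _ := rfl

/-- `G = S_∞ × S_∞ × S_∞`. -/
def Ggrp : Subgroup P3 := Sinf.prod (Sinf.prod Sinf)

/-- `K[α]`: diagonal triples `(h,h,h)` with `h ∈ S_∞` fixing `0,…,α-1`. -/
def KK (α : ℕ) : Subgroup P3 := Subgroup.map diag3 (Sinf ⊓ fixLt α)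

/-- The double coset `L·p·M`. -/
def dcosOf (L M : Subgroup P3) (p : P3) : Set P3 :=
  {y | ∃ a ∈ L, ∃ b ∈ M, y = a * p * b}

/-- underlying function of `θ_j[β]`. -/
def thetaFun (β j : ℕ) (x : ℕ) : ℕ :=
  if β ≤ x ∧ x < β + j then x + j
  else if β + j ≤ x ∧ x < β + 2 * j then x - j
  else x

lemma thetaFun_invol (β j : ℕ) : ∀ x, thetaFun β j (thetaFun β j x) = x := by
  intro x
  simp only [thetaFun]
  split_ifs <;> omega

/-- `θ_j[β]`: swaps the blocks `[β, β+j)` and `[β+j, β+2j)`. -/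
def theta (β j : ℕ) : Equiv.Perm ℕ :=
  ⟨thetaFun β j, thetaFun β j, thetaFun_invol β j, thetaFun_invol β j⟩

lemma theta_mem_Sinf (β j : ℕ) : theta β j ∈ Sinf := by
  apply Set.Finite.subset (Set.finite_Iio (β + 2 * j))
  intro x hx
  simp only [Set.mem_setOf_eq, theta, Equiv.coe_fn_mk, Set.mem_Iio] at hx ⊢
  by_contra hc
  push_neg at hc
  apply hx
  simp only [thetaFun]
  split_ifs <;> omega

/-- `Θ_j[β] = (θ_j[β], θ_j[β], θ_j[β])`. -/
def ThetaP (β j : ℕ) : P3 := diag3 (theta β j)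

lemma KK_le_G {α : ℕ} : KK α ≤ Ggrp := by
  rintro g ⟨h, hh, rfl⟩
  exact ⟨hh.1, hh.1, hh.1⟩

lemma Theta_mem_G (β j : ℕ) : ThetaP β j ∈ Ggrp :=
  ⟨theta_mem_Sinf β j, theta_mem_Sinf β j, theta_mem_Sinf β j⟩

/-- Permutations fixing every point `≥ n`. -/
def fixGe (n : ℕ) : Subgroup (Equiv.Perm ℕ) where
  carrier := {g | ∀ x, n ≤ x → g x = x}
  one_mem' := fun _ _ => rfl
  mul_mem' {f g} hf hg := fun x hx => by
    simp only [Equiv.Perm.mul_apply, hg x hx, hf x hx]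
  inv_mem' {g} hg := fun x hx => by
    apply g.injective
    rw [← Equiv.Perm.mul_apply, mul_inv_cancel, Equiv.Perm.one_apply, hg x hx]

/-- `K_n[α]`: diagonal triples `(h,h,h)` where `h` fixes `0,…,α-1` and all points `≥ n`. -/
def Kn (α n : ℕ) : Subgroup P3 := Subgroup.map diag3 (fixLt α ⊓ fixGe n)

/-- The normalized delta function of a set: `|D|⁻¹` on `D` and `0` elsewhere. -/
noncomputable def deltaFn (D : Set P3) : P3 → ℂ :=
  D.indicator fun _ => (Nat.card D : ℂ)⁻¹

/-- Convolution of functions on the group `Perm(ℕ)³`. -/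
noncomputable def conv (f g : P3 → ℂ) : P3 → ℂ :=
  fun h => ∑ᶠ u : P3, f u * g (u⁻¹ * h)

/-!
Write `K = K_n[α]`. All fibres of `(a, b) ↦ a * p * b` on `K × K` have the same size, so `δ_{p,n}`
is the image of the uniform distribution on `K × K`. Hence the mass of `δ_{p,n} * δ_{q,n}` on
`K z K` is the probability that `a p b c q d ∈ K z K` for uniform `a, b, c, d ∈ K`, that is, the
probability that `p w q ∈ K z K` for uniform `w ∈ K`.

Identify `K` with the permutations `h` of `[α, n)` and put `M = max α m`. If `h` maps `[α, M)` off
itself, then `h = c θ_j[α] d` with `c, d ∈ K` fixing `[0, M)`; these commute with the coordinates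
of `p` and `q`, so `p h q ∈ K (p Θ_j[α] q) K`. As `h x = y` has probability `1 / (n - α)` for all
`x, y ∈ [α, n)`, the remaining `h` have probability at most `(M - α)² / (n - α) → 0`.
-/

open Finset

theorem sum_comp_eq_nsmul_of_card_fiber_eq {X Y M : Type*} [Fintype X] [DecidableEq Y]
    [AddCommMonoid M] {φ : X → Y} {t : Finset Y} (hφ : ∀ x, φ x ∈ t) {N : ℕ}
    (hN : ∀ y ∈ t, #{x | φ x = y} = N) (f : Y → M) :
    ∑ x, f (φ x) = N • ∑ y ∈ t, f y := by
  rw [← sum_fiberwise_of_maps_to (fun x _ => hφ x), smul_sum]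
  refine sum_congr rfl fun y hy => ?_
  rw [sum_congr rfl fun x hx => by rw [(mem_filter.1 hx).2], sum_const, hN y hy]

section DoubleCoset

variable {L M : Subgroup P3}

theorem dcosOf_eq_range (p : P3) :
    dcosOf L M p = Set.range fun ab : L × M => ab.1 * p * ab.2 := by
  ext u
  simp only [dcosOf, Set.mem_ofPred_eq, Set.mem_range, Prod.exists, Subtype.exists, exists_prop]
  grind

theorem mul_mem_dcosOf_iff {a b : P3} (ha : a ∈ L) (hb : b ∈ M) {x z : P3} :
    a * x * b ∈ dcosOf L M z ↔ x ∈ dcosOf L M z := by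
  constructor
  · rintro ⟨a', ha', b', hb', he⟩
    refine ⟨a⁻¹ * a', mul_mem (inv_mem ha) ha', b' * b⁻¹, mul_mem hb' (inv_mem hb), ?_⟩
    calc x = a⁻¹ * (a * x * b) * b⁻¹ := by group
      _ = _ := by rw [he]; group
  · rintro ⟨a', ha', b', hb', rfl⟩
    exact ⟨a * a', mul_mem ha ha', b' * b, mul_mem hb' hb, by group⟩

theorem self_mem_dcosOf (p : P3) : p ∈ dcosOf L M p :=
  ⟨1, one_mem L, 1, one_mem M, by group⟩

theorem dcosOf_finite [Finite L] [Finite M] (p : P3) : (dcosOf L M p).Finite := by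
  rw [dcosOf_eq_range]
  exact Set.finite_range _

open scoped Classical in
theorem card_fiber_dcosOf [Fintype L] [Fintype M] {p u : P3} (hu : u ∈ dcosOf L M p) :
    #{ab : L × M | ab.1 * p * ab.2 = u} = #{ab : L × M | ab.1 * p * ab.2 = p} := by
  obtain ⟨a, ha, b, hb, rfl⟩ := hu
  refine card_nbij' (fun ab => (⟨a, ha⟩⁻¹ * ab.1, ab.2 * ⟨b, hb⟩⁻¹))
    (fun ab => (⟨a, ha⟩ * ab.1, ab.2 * ⟨b, hb⟩)) ?_ ?_ (fun ab _ => by simp)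
    (fun ab _ => by simp)
  · intro ab hab
    simp only [coe_filter, mem_univ, true_and, Set.mem_ofPred_eq] at hab ⊢
    push_cast
    calc _ = a⁻¹ * (ab.1 * p * ab.2) * b⁻¹ := by group
      _ = p := by rw [hab]; group
  · intro ab hab
    simp only [coe_filter, mem_univ, true_and, Set.mem_ofPred_eq] at hab ⊢
    push_cast
    calc _ = a * (ab.1 * p * ab.2) * b := by group
      _ = _ := by rw [hab]

theorem finsum_deltaFn_dcosOf_mul [Fintype L] [Fintype M] (p : P3) (f : P3 → ℂ) :
    ∑ᶠ u, deltaFn (dcosOf L M p) u * f u =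
      (∑ ab : L × M, f (ab.1 * p * ab.2)) / (Fintype.card L * Fintype.card M) := by
  classical
  have hD := dcosOf_finite (L := L) (M := M) p
  set N := #{ab : L × M | ab.1 * p * ab.2 = p}
  have hsum (g : P3 → ℂ) :
      ∑ ab : L × M, g (ab.1 * p * ab.2) = N • ∑ u ∈ hD.toFinset, g u :=
    sum_comp_eq_nsmul_of_card_fiber_eq
      (fun ab => hD.mem_toFinset.2 (by rw [dcosOf_eq_range]; exact ⟨ab, rfl⟩))
      (fun u hu => card_fiber_dcosOf (hD.mem_toFinset.1 hu)) g
  have hcard : (Fintype.card L * Fintype.card M : ℂ) = N * Nat.card (dcosOf L M p) := by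
    simpa [Nat.card_eq_card_finite_toFinset hD] using hsum 1
  have hN : (N : ℂ) ≠ 0 :=
    Nat.cast_ne_zero.2 (card_ne_zero_of_mem (s := univ.filter _) (a := 1) (by simp))
  have hD0 : (Nat.card (dcosOf L M p) : ℂ) ≠ 0 :=
    Nat.cast_ne_zero.2 (Nat.card_ne_zero.2 ⟨⟨p, self_mem_dcosOf p⟩, hD.to_subtype⟩)
  calc _ = (Nat.card (dcosOf L M p) : ℂ)⁻¹ * ∑ u ∈ hD.toFinset, f u := by
        simp_rw [deltaFn, ← Set.indicator_mul_left, ← finsum_mem_def,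
          finsum_mem_eq_finite_toFinset_sum _ hD, mul_sum]
    _ = _ := by rw [hsum f, hcard, nsmul_eq_mul]; field_simp

theorem finsum_mem_conv {φ : P3 → ℂ} (hφ : (Function.support φ).Finite) (ψ : P3 → ℂ)
    {D : Set P3} (hD : D.Finite) :
    ∑ᶠ g ∈ D, conv φ ψ g = ∑ᶠ u, φ u * ∑ᶠ v, ψ v * D.indicator 1 (u * v) := by
  have hreindex (u : P3) :
      ∑ᶠ g ∈ D, ψ (u⁻¹ * g) = ∑ᶠ v, ψ v * D.indicator 1 (u * v) := by
    rw [finsum_mem_def, ← finsum_comp_equiv (Equiv.mulLeft u)]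
    refine finsum_congr fun v => ?_
    by_cases hv : u * v ∈ D <;> simp [hv]
  simp_rw [conv, finsum_mem_eq_finite_toFinset_sum _ hD, ← hreindex,
    finsum_mem_eq_finite_toFinset_sum _ hD, mul_sum]
  exact sum_finsum_comm _ _ fun g _ => hφ.subset fun u hu => left_ne_zero_of_mul hu

theorem indicator_dcosOf_mul_mul {K : Subgroup P3} {a b : P3} (ha : a ∈ K) (hb : b ∈ K)
    (x z : P3) :
    (dcosOf K K z).indicator (1 : P3 → ℂ) (a * x * b) = (dcosOf K K z).indicator 1 x := by
  classical
  simp only [Set.indicator_apply, mul_mem_dcosOf_iff ha hb, Pi.one_apply]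

open scoped Classical in
theorem finsum_mem_dcosOf_conv_deltaFn (K : Subgroup P3) [Fintype K] (p q z : P3) :
    ∑ᶠ g ∈ dcosOf K K z, conv (deltaFn (dcosOf K K p)) (deltaFn (dcosOf K K q)) g =
      #{w : K | p * w * q ∈ dcosOf K K z} / Fintype.card K := by
  have hφ : (Function.support (deltaFn (dcosOf K K p))).Finite :=
    (dcosOf_finite p).subset Set.support_indicator_subset
  set k : ℂ := (Fintype.card K : ℂ)
  have hk : k ≠ 0 := Nat.cast_ne_zero.2 Fintype.card_ne_zero
  have hreindex (b : K) : ∑ c : K, (dcosOf K K z).indicator 1 (p * (b * c : K) * q) =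
      ∑ w : K, (dcosOf K K z).indicator (1 : P3 → ℂ) (p * w * q) :=
    Equiv.sum_comp (Equiv.mulLeft b) fun w : K => (dcosOf K K z).indicator 1 (p * w * q)
  rw [finsum_mem_conv hφ _ (dcosOf_finite z)]
  simp_rw [finsum_deltaFn_dcosOf_mul, ← mul_assoc, ← sum_div]
  calc _ = (∑ ab : K × K, ∑ cd : K × K,
          (dcosOf K K z).indicator (1 : P3 → ℂ) (p * (ab.2 * cd.1 : K) * q)) /
            (k * k) / (k * k) := by
        congr 2
        refine sum_congr rfl fun ab _ => sum_congr rfl fun cd _ => ?_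
        rw [← indicator_dcosOf_mul_mul ab.1.2 cd.2.2 (p * (ab.2 * cd.1 : K) * q),
          Subgroup.coe_mul]
        simp only [mul_assoc]
    _ = k ^ 3 * (∑ w : K, (dcosOf K K z).indicator (1 : P3 → ℂ) (p * w * q)) / k ^ 4 := by
        simp only [Fintype.sum_prod_type, sum_const, card_univ, nsmul_eq_mul, ← mul_sum,
          hreindex, Fintype.card_prod, Nat.cast_mul]
        field_simp
        ring
    _ = _ := by
        rw [natCast_card_filter]
        simp only [Set.indicator_apply, Pi.one_apply]
        field_simp

end DoubleCoset

section Permutations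

theorem lt_of_mem_fixGe {n x : ℕ} {g : Perm ℕ} (hg : g ∈ fixGe n) (hx : x < n) : g x < n := by
  by_contra! h
  have := g.injective (hg (g x) h)
  omega

theorem le_of_mem_fixLt {α x : ℕ} {g : Perm ℕ} (hg : g ∈ fixLt α) (hx : α ≤ x) :
    α ≤ g x := by
  by_contra! h
  have := g.injective (hg (g x) h)
  omega

def permIco (α n : ℕ) : Subgroup (Perm ℕ) := fixLt α ⊓ fixGe n

theorem mem_permIco_of_forall {α n : ℕ} {g : Perm ℕ}
    (hg : ∀ x, x < α ∨ n ≤ x → g x = x) : g ∈ permIco α n :=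
  ⟨fun x hx => hg x (Or.inl hx), fun x hx => hg x (Or.inr hx)⟩

theorem permIco_mono {α β n : ℕ} (h : α ≤ β) : permIco β n ≤ permIco α n :=
  fun _ hg => ⟨fun x hx => hg.1 x (hx.trans_le h), hg.2⟩

theorem apply_mem_Ico_of_mem_permIco {α n x : ℕ} {g : Perm ℕ} (hg : g ∈ permIco α n)
    (hx : x ∈ Ico α n) : g x ∈ Ico α n := by
  rw [mem_Ico] at hx ⊢
  exact ⟨le_of_mem_fixLt hg.1 hx.1, lt_of_mem_fixGe hg.2 hx.2⟩

theorem swap_mem_permIco {α n x y : ℕ} (hx : x ∈ Ico α n) (hy : y ∈ Ico α n) :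
    swap x y ∈ permIco α n := by
  rw [mem_Ico] at hx hy
  exact mem_permIco_of_forall fun z hz => swap_apply_of_ne_of_ne (by omega) (by omega)

instance (α n : ℕ) : Finite (permIco α n) := by
  refine Finite.of_injective (β := Fin n → Fin n)
    (fun g i => ⟨g.1 i, lt_of_mem_fixGe g.2.2 i.2⟩) fun g g' hgg' => ?_
  ext x
  by_cases hx : x < n
  · simpa using congrFun hgg' ⟨x, hx⟩
  · rw [g.2.2 x (not_lt.1 hx), g'.2.2 x (not_lt.1 hx)]

noncomputable instance (α n : ℕ) : Fintype (permIco α n) := Fintype.ofFinite _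

theorem diag3_injective : Function.Injective diag3 := fun _ _ h => congrArg Prod.fst h

noncomputable def permIcoEquivKn (α n : ℕ) : permIco α n ≃ Kn α n :=
  ((permIco α n).equivMapOfInjective diag3 diag3_injective).toEquiv

theorem coe_permIcoEquivKn_apply {α n : ℕ} (h : permIco α n) :
    (permIcoEquivKn α n h : P3) = diag3 h :=
  Subgroup.coe_equivMapOfInjective_apply _ _ _ h

instance (α n : ℕ) : Finite (Kn α n) := Finite.of_equiv _ (permIcoEquivKn α n)

noncomputable instance (α n : ℕ) : Fintype (Kn α n) := Fintype.ofFinite _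

theorem card_Kn (α n : ℕ) : Fintype.card (Kn α n) = Fintype.card (permIco α n) :=
  (Fintype.card_congr (permIcoEquivKn α n)).symm

open scoped Classical in
theorem card_filter_Kn (α n : ℕ) (P : P3 → Prop) :
    #{w : Kn α n | P w} = #{h : permIco α n | P (diag3 h)} :=
  (card_equiv (permIcoEquivKn α n) fun h => by simp [coe_permIcoEquivKn_apply]).symm

open scoped Classical in
theorem card_filter_apply_eq_mul_card {α n x y : ℕ} (hx : x ∈ Ico α n) (hy : y ∈ Ico α n) :
    #{h : permIco α n | (h : Perm ℕ) x = y} * (n - α) = Fintype.card (permIco α n) := by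
  have hfiber (y') (hy' : y' ∈ Ico α n) : #{h : permIco α n | (h : Perm ℕ) x = y'} =
      #{h : permIco α n | (h : Perm ℕ) x = y} := by
    let s : permIco α n := ⟨swap y' y, swap_mem_permIco hy' hy⟩
    refine card_nbij' (s * ·) (s⁻¹ * ·) (fun h hh => ?_) (fun h hh => ?_) (fun h _ => by simp)
      (fun h _ => by simp)
    · simp_all [s]
    · simp_all [s, swap_inv]
  have hsum := sum_comp_eq_nsmul_of_card_fiber_eq (φ := fun h : permIco α n => (h : Perm ℕ) x)
    (fun h => apply_mem_Ico_of_mem_permIco h.2 hx) hfiber (fun _ => 1)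
  simpa [mul_comm] using hsum.symm

open scoped Classical in
theorem card_filter_exists_apply_mem_mul_le {α M n : ℕ} (hMn : M ≤ n) :
    #{h : permIco α n | ∃ x ∈ Ico α M, (h : Perm ℕ) x ∈ Ico α M} * (n - α) ≤
      (M - α) ^ 2 * Fintype.card (permIco α n) := by
  have hI : Ico α M ⊆ Ico α n := Ico_subset_Ico_right hMn
  calc _ ≤ (∑ xy ∈ Ico α M ×ˢ Ico α M, #{h : permIco α n | (h : Perm ℕ) xy.1 = xy.2}) *
        (n - α) := by
        gcongr
        refine (card_le_card fun h hh => ?_).trans card_biUnion_le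
        obtain ⟨x, hx, hhx⟩ := (mem_filter.1 hh).2
        exact mem_biUnion.2 ⟨(x, (h : Perm ℕ) x), mem_product.2 ⟨hx, hhx⟩, by simp⟩
    _ = (M - α) ^ 2 * Fintype.card (permIco α n) := by
        rw [sum_mul, sum_congr rfl fun xy hxy => card_filter_apply_eq_mul_card
          (hI (mem_product.1 hxy).1) (hI (mem_product.1 hxy).2), sum_const, card_product,
          Nat.card_Ico, smul_eq_mul, sq]

end Permutations

section Decomposition

theorem theta_apply_of_mem_Ico {β j x : ℕ} (hx : x ∈ Ico β (β + j)) :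
    theta β j x = x + j := by
  rw [mem_Ico] at hx
  simp only [theta, coe_fn_mk, thetaFun]
  split_ifs <;> omega

theorem theta_apply_of_notMem_Ico {β j x : ℕ} (hx : x ∉ Ico β (β + 2 * j)) :
    theta β j x = x := by
  rw [mem_Ico] at hx
  simp only [theta, coe_fn_mk, thetaFun]
  split_ifs <;> omega

theorem theta_mul_self (β j : ℕ) : theta β j * theta β j = 1 :=
  Equiv.ext (thetaFun_invol β j)

theorem exists_perm_apply_eq_of_injective {ι β : Type*} [Finite ι] {B : Set β} {f g : ι → β}
    (hf : Function.Injective f) (hg : Function.Injective g) (hfB : ∀ i, f i ∈ B)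
    (hgB : ∀ i, g i ∈ B) :
    ∃ σ : Perm β, (∀ i, σ (f i) = g i) ∧ ∀ x ∉ B, σ x = x := by
  classical
  obtain ⟨τ, hτ⟩ := Perm.exists_extending_pair (fun i => (⟨f i, hfB i⟩ : B))
    (fun i => ⟨g i, hgB i⟩) (fun i i' h => hf (congrArg Subtype.val h))
    (fun i i' h => hg (congrArg Subtype.val h))
  refine ⟨Perm.ofSubtype τ, fun i => ?_, fun x hx => Perm.ofSubtype_apply_of_not_mem τ hx⟩
  rw [Perm.ofSubtype_apply_of_mem τ (hfB i), hτ i]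

theorem exists_mem_permIco_eq_mul_theta_mul {α M j n : ℕ} (hαM : α ≤ M) (hMj : M ≤ α + j)
    (hn : α + 2 * j ≤ n) {h : Perm ℕ} (hh : h ∈ permIco α n)
    (hdisj : ∀ x ∈ Ico α M, h x ∉ Ico α M) :
    ∃ c ∈ permIco M n, ∃ d ∈ permIco M n, h = c * theta α j * d := by
  have hinv : h⁻¹ ∈ permIco α n := inv_mem hh
  have hf (y : Ico α M) : h⁻¹ y ∈ Set.Ico M n := by
    have hy := mem_Ico.1 y.2
    have hαy := apply_mem_Ico_of_mem_permIco hinv (mem_Ico.2 ⟨hy.1, by omega⟩)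
    have := hdisj (h⁻¹ y)
    simp only [mem_Ico, Set.mem_Ico, Perm.coe_inv, apply_symm_apply] at hαy this ⊢
    omega
  -- `d` sends `h⁻¹ y` to `θ y = y + j` for `y ∈ [α, M)`, so that `c = h d⁻¹ θ` fixes `[0, M)`.
  obtain ⟨d, hd, hdB⟩ := exists_perm_apply_eq_of_injective (B := Set.Ico M n)
    (f := fun y : Ico α M => h⁻¹ y) (g := fun y => y + j)
    (fun y y' hyy' => Subtype.ext (h⁻¹.injective hyy'))
    (fun y y' hyy' => Subtype.ext (by simpa using hyy'))
    hf (fun y => by have := mem_Ico.1 y.2; simp only [Set.mem_Ico]; omega)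
  have hdK : d ∈ permIco M n :=
    mem_permIco_of_forall fun x hx => hdB x (by simp only [Set.mem_Ico]; omega)
  refine ⟨h * d⁻¹ * theta α j, mem_permIco_of_forall fun x hx => ?_, d, hdK, ?_⟩
  · have hdinv : d⁻¹ ∈ permIco M n := inv_mem hdK
    simp only [Perm.mul_apply]
    rcases lt_or_ge x α with hxα | hxα
    · rw [theta_apply_of_notMem_Ico (by simp; omega), hdinv.1 x (by omega), hh.1 x hxα]
    rcases hx with hxM | hxn
    · rw [theta_apply_of_mem_Ico (mem_Ico.2 ⟨hxα, by omega⟩),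
        ← hd ⟨x, mem_Ico.2 ⟨hxα, hxM⟩⟩]
      simp
    · rw [theta_apply_of_notMem_Ico (by simp; omega), hdinv.2 x hxn, hh.2 x hxn]
  · rw [mul_assoc (h * d⁻¹), theta_mul_self]; group

theorem commute_of_mem_fixGe_of_mem_fixLt {m : ℕ} {f g : Perm ℕ} (hf : f ∈ fixGe m)
    (hg : g ∈ fixLt m) : Commute f g :=
  Perm.Disjoint.commute fun x => (le_or_gt m x).imp (hf x) (hg x)

theorem commute_diag3 {m : ℕ} {p : P3} (hp : p ∈ (fixGe m).prod ((fixGe m).prod (fixGe m)))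
    {c : Perm ℕ} (hc : c ∈ fixLt m) : Commute p (diag3 c) :=
  Commute.prod (commute_of_mem_fixGe_of_mem_fixLt hp.1 hc)
    (Commute.prod (commute_of_mem_fixGe_of_mem_fixLt hp.2.1 hc)
      (commute_of_mem_fixGe_of_mem_fixLt hp.2.2 hc))

theorem mul_diag3_mul_mem_dcosOf {α m j n : ℕ} (hmj : m ≤ j) (hn : α + 2 * j ≤ n) {p q : P3}
    (hp : p ∈ (fixGe m).prod ((fixGe m).prod (fixGe m)))
    (hq : q ∈ (fixGe m).prod ((fixGe m).prod (fixGe m))) {h : Perm ℕ} (hh : h ∈ permIco α n)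
    (hdisj : ∀ x ∈ Ico α (max α m), h x ∉ Ico α (max α m)) :
    p * diag3 h * q ∈ dcosOf (Kn α n) (Kn α n) (p * ThetaP α j * q) := by
  obtain ⟨c, hc, d, hd, rfl⟩ := exists_mem_permIco_eq_mul_theta_mul (le_max_left α m)
    (max_le (by omega) (by omega)) hn hh hdisj
  have hfix : fixLt (max α m) ≤ fixLt m := fun g hg x hx => hg x (lt_max_of_lt_right hx)
  refine ⟨diag3 c, Subgroup.mem_map_of_mem _ (permIco_mono (le_max_left α m) hc),
    diag3 d, Subgroup.mem_map_of_mem _ (permIco_mono (le_max_left α m) hd), ?_⟩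
  calc p * diag3 (c * theta α j * d) * q = p * diag3 c * ThetaP α j * (diag3 d * q) := by
        simp only [map_mul, ThetaP, mul_assoc]
    _ = diag3 c * (p * ThetaP α j * q) * diag3 d := by
        rw [(commute_diag3 hp (hfix hc.1)).eq, ← (commute_diag3 hq (hfix hd.1)).eq]
        group

open scoped Classical in
theorem one_sub_div_le_card_filter_mem_dcosOf_div {α m j n : ℕ} (hmj : m ≤ j)
    (hn : α + 2 * j < n) {p q : P3} (hp : p ∈ (fixGe m).prod ((fixGe m).prod (fixGe m)))
    (hq : q ∈ (fixGe m).prod ((fixGe m).prod (fixGe m))) :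
    1 - (((max α m - α) ^ 2 : ℕ) : ℝ) / (n - α : ℕ) ≤
      (#{h : permIco α n |
          p * diag3 h * q ∈ dcosOf (Kn α n) (Kn α n) (p * ThetaP α j * q)} : ℝ) /
        Fintype.card (permIco α n) := by
  set M := max α m
  set good := #{h : permIco α n |
    p * diag3 h * q ∈ dcosOf (Kn α n) (Kn α n) (p * ThetaP α j * q)}
  set bad := #{h : permIco α n | ∃ x ∈ Ico α M, (h : Perm ℕ) x ∈ Ico α M}
  set k := Fintype.card (permIco α n)
  have hsplit : k ≤ good + bad := by
    refine (card_le_card fun h _ => ?_).trans (card_union_le _ _)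
    by_cases hdisj : ∀ x ∈ Ico α M, (h : Perm ℕ) x ∉ Ico α M
    · exact mem_union_left _
        (mem_filter.2 ⟨mem_univ _, mul_diag3_mul_mem_dcosOf hmj hn.le hp hq h.2 hdisj⟩)
    · push Not at hdisj
      exact mem_union_right _ (mem_filter.2 ⟨mem_univ _, hdisj⟩)
  have hk : (0 : ℝ) < k := by exact_mod_cast Fintype.card_pos
  have hnα : (0 : ℝ) < (n - α : ℕ) := by exact_mod_cast (by omega : 0 < n - α)
  have hbad : (bad : ℝ) / k ≤ ((M - α) ^ 2 : ℕ) / (n - α : ℕ) := by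
    rw [div_le_div_iff₀ hk hnα]
    exact_mod_cast card_filter_exists_apply_mem_mul_le (α := α) (n := n) (by omega)
  have hone_le : 1 ≤ (good : ℝ) / k + bad / k := by
    rw [← add_div, le_div_iff₀ hk, one_mul]
    exact_mod_cast hsplit
  linarith

end Decomposition

open Filter Topology

theorem tendsto_one_sub_div_natCast_sub (C : ℝ) (a : ℕ) :
    Tendsto (fun n : ℕ => 1 - C / (n - a : ℕ)) atTop (𝓝 1) := by
  simpa only [sub_zero, Function.comp_def] using (tendsto_const_nhds (x := (1 : ℝ))).sub
    ((tendsto_const_nhds (x := C)).div_atTop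
      (tendsto_natCast_atTop_atTop.comp (tendsto_sub_atTop_nat a)))

open scoped Classical in
theorem tendsto_card_filter_mem_dcosOf_div {α m j : ℕ} (hmj : m ≤ j) {p q : P3}
    (hp : p ∈ (fixGe m).prod ((fixGe m).prod (fixGe m)))
    (hq : q ∈ (fixGe m).prod ((fixGe m).prod (fixGe m))) :
    Tendsto (fun n => (#{h : permIco α n |
        p * diag3 h * q ∈ dcosOf (Kn α n) (Kn α n) (p * ThetaP α j * q)} : ℝ) /
          Fintype.card (permIco α n)) atTop (𝓝 1) := by
  refine tendsto_of_tendsto_of_tendsto_of_le_of_le'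
    (tendsto_one_sub_div_natCast_sub (((max α m - α) ^ 2 : ℕ) : ℝ) α) tendsto_const_nhds
    ?_ ?_
  · exact eventually_atTop.2 ⟨α + 2 * j + 1, fun n hn =>
      one_sub_div_le_card_filter_mem_dcosOf_div hmj (by omega) hp hq⟩
  · exact Eventually.of_forall fun n =>
      div_le_one_of_le₀ (by exact_mod_cast card_filter_le _ _) (by positivity)

/-- **Concentration of convolutions.** Let `p, q ∈ G` have all coordinates
supported in `[0, m)`.  For all sufficiently large `j`, the total mass that the convolution
`δ_{p,n} * δ_{q,n}` of the normalized delta functions of the double cosets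
`K_n[α]·p·K_n[α]` and `K_n[α]·q·K_n[α]` puts on the double coset
`K_n[α]·(p·Θ_j[α]·q)·K_n[α]` tends to `1` as `n → ∞`. -/
theorem concentration_of_convolutions (α m : ℕ) (p q : P3)
    (hp : p ∈ (fixGe m).prod ((fixGe m).prod (fixGe m)))
    (hq : q ∈ (fixGe m).prod ((fixGe m).prod (fixGe m))) :
    ∃ j₀ : ℕ, m ≤ j₀ ∧ ∀ j : ℕ, j₀ ≤ j →
      Filter.Tendsto
        (fun n : ℕ => ∑ᶠ g ∈ dcosOf (Kn α n) (Kn α n) (p * ThetaP α j * q),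
          conv (deltaFn (dcosOf (Kn α n) (Kn α n) p))
            (deltaFn (dcosOf (Kn α n) (Kn α n) q)) g)
        Filter.atTop (nhds (1 : ℂ)) := by
  refine ⟨m, le_rfl, fun j hj => ?_⟩
  have hlim := (Complex.continuous_ofReal.tendsto 1).comp
    (tendsto_card_filter_mem_dcosOf_div (α := α) hj hp hq)
  rw [Complex.ofReal_one] at hlim
  refine hlim.congr fun n => ?_
  rw [Function.comp_apply, finsum_mem_dcosOf_conv_deltaFn, card_Kn, card_filter_Kn α n
    (fun w => p * w * q ∈ dcosOf (Kn α n) (Kn α n) (p * ThetaP α j * q))]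
  push_cast
  rfl
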